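/- arXiv:0805.2755 — 4 statements merged into one kernel-verified Lean document; each statement's English description precedes it below -/
import Mathlib

section
/- The maps Δ and ε make 𝒜 a coalgebra over R₀: Δ is coassociative, (Δ ⊗ id)∘Δ = (id ⊗ Δ)∘Δ, and ε is a counit for Δ, i.e. (ε ⊗ id)∘Δ = id_𝒜 = (id ⊗ ε)∘Δ. -/
open TensorProduct

noncomputable section

/-- `R₀ = ℚ[a,h]`. -/
abbrev R0 : Type := MvPolynomial (Fin 2) ℚ

noncomputable def aP : R0 := MvPolynomial.X 0
noncomputable def hP : R0 := MvPolynomial.X 1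

noncomputable def quadPoly : Polynomial R0 :=
  Polynomial.X ^ 2 - Polynomial.C hP * Polynomial.X - Polynomial.C aP

/-- `𝒜 = R₀[X]/(X² − h·X − a)`. -/
abbrev Afr : Type := AdjoinRoot quadPoly

noncomputable def Xa : Afr := AdjoinRoot.root quadPoly

/-! The module `𝒜` is spanned over `R₀` by `1` and `X`, since `X² − h·X − a` is monic of degree 2.
All three identities are equalities of `R₀`-linear maps out of `𝒜`, so it suffices to check them
on `1` and `X`, where they are direct computations in the tensor powers of `𝒜`; the
multiplication of `𝒜` plays no role. -/

theorem AdjoinRoot.span_one_root_eq_top {R : Type*} [CommRing R] {f : Polynomial R}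
    (hf : f.Monic) (hdeg : f.natDegree = 2) : Submodule.span R {1, AdjoinRoot.root f} = ⊤ := by
  rw [eq_top_iff, ← (AdjoinRoot.powerBasis' hf).basis.span_eq, Submodule.span_le]
  rintro _ ⟨⟨i, hi⟩, rfl⟩
  rw [PowerBasis.basis_eq_pow, AdjoinRoot.powerBasis'_gen]
  simp only [AdjoinRoot.powerBasis'_dim, hdeg] at hi
  interval_cases i <;> exact Submodule.subset_span (by simp)

section

variable {R M : Type*} [CommRing R] [AddCommGroup M] [Module R M]
  {Δ : M →ₗ[R] M ⊗[R] M} {ε : M →ₗ[R] R} {e x : M} {h a : R}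

theorem coassoc_of_span_eq_top (hspan : Submodule.span R {e, x} = ⊤)
    (hΔe : Δ e = e ⊗ₜ x + x ⊗ₜ e - h • (e ⊗ₜ e)) (hΔx : Δ x = x ⊗ₜ x + a • (e ⊗ₜ e)) :
    (TensorProduct.assoc R M M M).toLinearMap ∘ₗ map Δ LinearMap.id ∘ₗ Δ =
      map LinearMap.id Δ ∘ₗ Δ := by
  refine LinearMap.ext_on hspan ?_
  rintro y (rfl | rfl) <;>
  simp only [LinearMap.comp_apply, LinearEquiv.coe_coe, hΔe, hΔx, map_add, map_sub, map_smul,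
    map_tmul, LinearMap.id_coe, id_eq, tmul_add, add_tmul, tmul_sub, sub_tmul, tmul_smul,
    ← smul_tmul', assoc_tmul] <;>
  module

theorem lid_map_counit_of_span_eq_top (hspan : Submodule.span R {e, x} = ⊤)
    (hΔe : Δ e = e ⊗ₜ x + x ⊗ₜ e - h • (e ⊗ₜ e)) (hΔx : Δ x = x ⊗ₜ x + a • (e ⊗ₜ e))
    (hεe : ε e = 0) (hεx : ε x = 1) :
    (TensorProduct.lid R M).toLinearMap ∘ₗ map ε LinearMap.id ∘ₗ Δ = LinearMap.id := by
  refine LinearMap.ext_on hspan ?_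
  rintro y (rfl | rfl) <;>
  simp only [LinearMap.comp_apply, LinearEquiv.coe_coe, hΔe, hΔx, map_add, map_sub, map_smul,
    map_tmul, LinearMap.id_coe, id_eq, lid_tmul, hεe, hεx] <;>
  module

theorem rid_map_counit_of_span_eq_top (hspan : Submodule.span R {e, x} = ⊤)
    (hΔe : Δ e = e ⊗ₜ x + x ⊗ₜ e - h • (e ⊗ₜ e)) (hΔx : Δ x = x ⊗ₜ x + a • (e ⊗ₜ e))
    (hεe : ε e = 0) (hεx : ε x = 1) :
    (TensorProduct.rid R M).toLinearMap ∘ₗ map LinearMap.id ε ∘ₗ Δ = LinearMap.id := by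
  refine LinearMap.ext_on hspan ?_
  rintro y (rfl | rfl) <;>
  simp only [LinearMap.comp_apply, LinearEquiv.coe_coe, hΔe, hΔx, map_add, map_sub, map_smul,
    map_tmul, LinearMap.id_coe, id_eq, rid_tmul, hεe, hεx] <;>
  module

end

lemma quadPoly_monic : quadPoly.Monic := by unfold quadPoly; monicity!

lemma quadPoly_natDegree : quadPoly.natDegree = 2 := by unfold quadPoly; compute_degree!

/-- `Δ` and `ε` make `𝒜` a coalgebra over `R₀`: `Δ` is coassociative and `ε`
is a counit for `Δ`. -/
theorem stmt_3 (Δ : Afr →ₗ[R0] Afr ⊗[R0] Afr)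
    (hΔ1 : Δ 1 = (1 : Afr) ⊗ₜ[R0] Xa + Xa ⊗ₜ[R0] (1 : Afr) - hP • ((1 : Afr) ⊗ₜ[R0] (1 : Afr)))
    (hΔX : Δ Xa = Xa ⊗ₜ[R0] Xa + aP • ((1 : Afr) ⊗ₜ[R0] (1 : Afr)))
    (ε : Afr →ₗ[R0] R0) (hε1 : ε 1 = 0) (hεX : ε Xa = 1) :
    (∀ u : Afr,
        (TensorProduct.assoc R0 Afr Afr Afr) ((TensorProduct.map Δ LinearMap.id) (Δ u)) =
          (TensorProduct.map LinearMap.id Δ) (Δ u)) ∧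
      (∀ u : Afr, (TensorProduct.lid R0 Afr) ((TensorProduct.map ε LinearMap.id) (Δ u)) = u) ∧
      (∀ u : Afr, (TensorProduct.rid R0 Afr) ((TensorProduct.map LinearMap.id ε) (Δ u)) = u) := by
  have hspan : Submodule.span R0 {1, Xa} = ⊤ :=
    AdjoinRoot.span_one_root_eq_top quadPoly_monic quadPoly_natDegree
  exact ⟨LinearMap.congr_fun (coassoc_of_span_eq_top hspan hΔ1 hΔX),
    LinearMap.congr_fun (lid_map_counit_of_span_eq_top hspan hΔ1 hΔX hε1 hεX),
    LinearMap.congr_fun (rid_map_counit_of_span_eq_top hspan hΔ1 hΔX hε1 hεX)⟩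

end
end

section
/- Let R be a commutative ring, α₁, β₁, α₂, β₂, c ∈ R. Let (D₀, D₁) be the 2-row Koszul matrix factorization with rows (α₁, β₁), (α₂, β₂), and let (D₀', D₁') be the one with rows (α₁ + c·α₂, β₁), (α₂, β₂ − c·β₁) (the elementary row operation [12]_c). Then the two factorizations are isomorphic: there exist invertible 2×2 matrices M₀, M₁ over R such that M₁·D₀ = D₀'·M₀ and M₀·D₁ = D₁'·M₁. In particular both factorizations have the same potential α₁β₁ + α₂β₂ = (α₁ + cα₂)β₁ + α₂(β₂ − cβ₁). -/
section Koszul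

variable {R : Type*} [CommRing R]

def koszulD₀ (α₁ β₁ α₂ β₂ : R) : Matrix (Fin 2) (Fin 2) R := !![α₁, β₂; α₂, -β₁]

def koszulD₁ (α₁ β₁ α₂ β₂ : R) : Matrix (Fin 2) (Fin 2) R := !![β₁, β₂; α₂, -α₁]

theorem isUnit_unitriangular_fin_two (c : R) : IsUnit !![(1 : R), c; 0, 1] := by
  simp [Matrix.isUnit_iff_isUnit_det, Matrix.det_fin_two_of]

theorem unitriangular_mul_koszulD₀ (α₁ β₁ α₂ β₂ c : R) :
    !![1, c; 0, 1] * koszulD₀ α₁ β₁ α₂ β₂ = koszulD₀ (α₁ + c * α₂) β₁ α₂ (β₂ - c * β₁) := by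
  simp [koszulD₀, sub_eq_add_neg]

theorem koszulD₁_eq_mul_unitriangular (α₁ β₁ α₂ β₂ c : R) :
    koszulD₁ α₁ β₁ α₂ β₂ = koszulD₁ (α₁ + c * α₂) β₁ α₂ (β₂ - c * β₁) * !![1, c; 0, 1] := by
  ext i j
  fin_cases i <;> fin_cases j <;> simp [koszulD₁] <;> ring

end Koszul

/-- the elementary row operation `[12]_c`, taking the Koszul rows
`(α₁, β₁), (α₂, β₂)` to `(α₁ + c·α₂, β₁), (α₂, β₂ − c·β₁)`, produces an isomorphic
matrix factorization, and both have the same potential. -/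
theorem stmt_8 {R : Type*} [CommRing R] (α₁ β₁ α₂ β₂ c : R) :
    let D₀ : Matrix (Fin 2) (Fin 2) R := !![α₁, β₂; α₂, -β₁]
    let D₁ : Matrix (Fin 2) (Fin 2) R := !![β₁, β₂; α₂, -α₁]
    let D₀' : Matrix (Fin 2) (Fin 2) R := !![α₁ + c * α₂, β₂ - c * β₁; α₂, -β₁]
    let D₁' : Matrix (Fin 2) (Fin 2) R := !![β₁, β₂ - c * β₁; α₂, -(α₁ + c * α₂)]
    (∃ M₀ M₁ : Matrix (Fin 2) (Fin 2) R,
        IsUnit M₀ ∧ IsUnit M₁ ∧ M₁ * D₀ = D₀' * M₀ ∧ M₀ * D₁ = D₁' * M₁) ∧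
      α₁ * β₁ + α₂ * β₂ = (α₁ + c * α₂) * β₁ + α₂ * (β₂ - c * β₁) := by
  intro D₀ D₁ D₀' D₁'
  refine ⟨⟨1, !![1, c; 0, 1], isUnit_one, isUnit_unitriangular_fin_two c, ?_, ?_⟩, by ring⟩
  · rw [mul_one]
    exact unitriangular_mul_koszulD₀ α₁ β₁ α₂ β₂ c
  · rw [one_mul]
    exact koszulD₁_eq_mul_unitriangular α₁ β₁ α₂ β₂ c
end

section
/- Let R be a commutative ring, α₁, β₁, α₂, β₂, k ∈ R, and suppose β₁ and β₂ are coprime (i.e. the ideal they generate is all of R). Let (D₀, D₁) be the 2-row Koszul matrix factorization with rows (α₁, β₁), (α₂, β₂), and let (D₀'', D₁'') be the one with rows (α₁ + k·β₂, β₁), (α₂ − k·β₁, β₂) (the twist by k). Then the two factorizations are isomorphic: there exist invertible 2×2 matrices M₀, M₁ over R such that M₁·D₀ = D₀''·M₀ and M₀·D₁ = D₁''·M₁. In particular both factorizations have the same potential α₁β₁ + α₂β₂ = (α₁ + kβ₂)β₁ + (α₂ − kβ₁)β₂. -/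
/-!
The isomorphism is the shear `[[1, 0], [-k, 1]]` on one side and the identity on the other:
multiplying `D₀''` on the right by the shear subtracts `k` times its second column from its first,
which undoes the twist, and multiplying `D₁` on the left by it subtracts `k` times its first row
from its second, which performs it.
-/

namespace Matrix

variable {R : Type*} [CommRing R]

def koszul₀ (α₁ β₁ α₂ β₂ : R) : Matrix (Fin 2) (Fin 2) R := !![α₁, β₂; α₂, -β₁]

def koszul₁ (α₁ β₁ α₂ β₂ : R) : Matrix (Fin 2) (Fin 2) R := !![β₁, β₂; α₂, -α₁]

theorem isUnit_lowerShear (c : R) : IsUnit !![(1 : R), 0; c, 1] := by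
  rw [isUnit_iff_isUnit_det, det_fin_two_of]
  simp

variable (α₁ β₁ α₂ β₂ k : R)

theorem koszul₀_eq_twist_mul_shear :
    koszul₀ α₁ β₁ α₂ β₂ =
      koszul₀ (α₁ + k * β₂) β₁ (α₂ - k * β₁) β₂ * !![1, 0; -k, 1] := by
  rw [koszul₀, koszul₀, mul_fin_two]
  ext i j
  fin_cases i <;> fin_cases j <;> simp <;> ring

theorem shear_mul_koszul₁_eq_twist :
    !![1, 0; -k, 1] * koszul₁ α₁ β₁ α₂ β₂ = koszul₁ (α₁ + k * β₂) β₁ (α₂ - k * β₁) β₂ := by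
  rw [koszul₁, koszul₁, mul_fin_two]
  ext i j
  fin_cases i <;> fin_cases j <;> simp
  ring

end Matrix

open Matrix in
theorem stmt_9_general {R : Type*} [CommRing R] (α₁ β₁ α₂ β₂ k : R) :
    let D₀ : Matrix (Fin 2) (Fin 2) R := !![α₁, β₂; α₂, -β₁]
    let D₁ : Matrix (Fin 2) (Fin 2) R := !![β₁, β₂; α₂, -α₁]
    let D₀'' : Matrix (Fin 2) (Fin 2) R := !![α₁ + k * β₂, β₂; α₂ - k * β₁, -β₁]
    let D₁'' : Matrix (Fin 2) (Fin 2) R := !![β₁, β₂; α₂ - k * β₁, -(α₁ + k * β₂)]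
    (∃ M₀ M₁ : Matrix (Fin 2) (Fin 2) R,
        IsUnit M₀ ∧ IsUnit M₁ ∧ M₁ * D₀ = D₀'' * M₀ ∧ M₀ * D₁ = D₁'' * M₁) ∧
      α₁ * β₁ + α₂ * β₂ = (α₁ + k * β₂) * β₁ + (α₂ - k * β₁) * β₂ := by
  intro D₀ D₁ D₀'' D₁''
  refine ⟨⟨!![1, 0; -k, 1], 1, isUnit_lowerShear (-k), isUnit_one, ?_, ?_⟩, by ring⟩
  · rw [one_mul]
    exact koszul₀_eq_twist_mul_shear α₁ β₁ α₂ β₂ k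
  · rw [mul_one]
    exact shear_mul_koszul₁_eq_twist α₁ β₁ α₂ β₂ k

/-- if `β₁` and `β₂` are coprime, the twist by `k`, taking the Koszul rows
`(α₁, β₁), (α₂, β₂)` to `(α₁ + k·β₂, β₁), (α₂ − k·β₁, β₂)`, produces an isomorphic matrix
factorization, and both have the same potential. -/
theorem stmt_9 {R : Type*} [CommRing R] (α₁ β₁ α₂ β₂ k : R) (hco : IsCoprime β₁ β₂) :
    let D₀ : Matrix (Fin 2) (Fin 2) R := !![α₁, β₂; α₂, -β₁]
    let D₁ : Matrix (Fin 2) (Fin 2) R := !![β₁, β₂; α₂, -α₁]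
    let D₀'' : Matrix (Fin 2) (Fin 2) R := !![α₁ + k * β₂, β₂; α₂ - k * β₁, -β₁]
    let D₁'' : Matrix (Fin 2) (Fin 2) R := !![β₁, β₂; α₂ - k * β₁, -(α₁ + k * β₂)]
    (∃ M₀ M₁ : Matrix (Fin 2) (Fin 2) R,
        IsUnit M₀ ∧ IsUnit M₁ ∧ M₁ * D₀ = D₀'' * M₀ ∧ M₀ * D₁ = D₁'' * M₁) ∧
      α₁ * β₁ + α₂ * β₂ = (α₁ + k * β₂) * β₁ + (α₂ - k * β₁) * β₂ :=
  stmt_9_general α₁ β₁ α₂ β₂ k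
end

section
/- In ℚ[a,h,x₁,x₂], the ideal I₂ = (x₁² − hx₁ − a, x₂² − hx₂ − a) is contained in the ideal I₁ = (x₁ + x₂ − h, x₁x₂ + a), so there is an induced surjective R₀-algebra homomorphism pr : B₂ → B₁; moreover, under the isomorphisms f : B₁ ≅ 𝒜 and g : B₂ ≅ 𝒜 ⊗_{R₀} 𝒜, the map pr corresponds to the multiplication map m : 𝒜 ⊗_{R₀} 𝒜 → 𝒜, i.e. f ∘ pr = m ∘ g as R₀-linear maps B₂ → 𝒜. (This is the statement Λ₀* = m for the induced map on homology.) -/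
open TensorProduct

noncomputable section

/-- `ℚ[a,h,x₁,x₂]`, realized as the polynomial ring in `x₁ = X 0`, `x₂ = X 1` over `R₀`. -/
abbrev S : Type := MvPolynomial (Fin 2) R0

noncomputable def y1 : S := MvPolynomial.X 0
noncomputable def y2 : S := MvPolynomial.X 1

/-- The ideal `(x₁ + x₂ − h, x₁x₂ + a)`. -/
noncomputable def I1 : Ideal S :=
  Ideal.span ({y1 + y2 - MvPolynomial.C hP, y1 * y2 + MvPolynomial.C aP} : Set S)

/-- The ideal `(x₁² − hx₁ − a, x₂² − hx₂ − a)`. -/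
noncomputable def I2 : Ideal S :=
  Ideal.span ({y1 ^ 2 - MvPolynomial.C hP * y1 - MvPolynomial.C aP,
    y2 ^ 2 - MvPolynomial.C hP * y2 - MvPolynomial.C aP} : Set S)

/-- `B₁ = ℚ[a,h,x₁,x₂]/(x₁ + x₂ − h, x₁x₂ + a)`. -/
abbrev B1 : Type := S ⧸ I1

/-- `B₂ = ℚ[a,h,x₁,x₂]/(x₁² − hx₁ − a, x₂² − hx₂ − a)`. -/
abbrev B2 : Type := S ⧸ I2

/-! Both `f ∘ pr` and `m ∘ g` are `R₀`-algebra maps out of `R₀[x₁, x₂]` (`m` is multiplicative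
because `𝒜` is commutative), so it suffices to compare them on `x₁` and `x₂`: both send
`x₁ ↦ X` and `x₂ ↦ h − X`. The containment `I₂ ≤ I₁` comes from
`x² − hx − a = x (x + y − h) − (xy + a)`. -/

theorem Ideal.span_quadratic_le_span_vieta {R : Type*} [CommRing R] (x y h a : R) :
    Ideal.span {x ^ 2 - h * x - a, y ^ 2 - h * y - a} ≤ Ideal.span {x + y - h, x * y + a} := by
  rw [Ideal.span_le, Set.insert_subset_iff, Set.singleton_subset_iff]
  exact ⟨Ideal.mem_span_pair.2 ⟨x, -1, by ring⟩, Ideal.mem_span_pair.2 ⟨y, -1, by ring⟩⟩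

theorem I2_le_I1 : I2 ≤ I1 :=
  Ideal.span_quadratic_le_span_vieta _ _ _ _

theorem mk_I1_y2 :
    Ideal.Quotient.mk I1 y2 = algebraMap R0 B1 hP - Ideal.Quotient.mk I1 y1 := by
  rw [eq_sub_iff_add_eq, add_comm, ← map_add, ← Ideal.Quotient.mk_algebraMap,
    ← sub_eq_zero, ← map_sub, Ideal.Quotient.eq_zero_iff_mem]
  exact Ideal.subset_span (Set.mem_insert _ _)

theorem mk_I2_y2 : Ideal.Quotient.mk I2 y2 =
    algebraMap R0 B2 hP - Ideal.Quotient.mk I2 (MvPolynomial.C hP - y2) := by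
  rw [map_sub, ← Ideal.Quotient.mk_algebraMap, MvPolynomial.algebraMap_eq, sub_sub_cancel]

/-- `I₂ ⊆ I₁`, so the identity of `ℚ[a,h,x₁,x₂]` induces a surjective
projection `pr : B₂ → B₁` (given on classes by `pr(mk_{I₂} s) = mk_{I₁} s`); under the
isomorphisms `f : B₁ ≅ 𝒜` and `g : B₂ ≅ 𝒜 ⊗ 𝒜`, the map `pr` corresponds to the
multiplication map `m`, i.e. `f ∘ pr = m ∘ g`.  (This is `Λ₀* = m`.) -/
theorem stmt_16 (f : B1 ≃ₐ[R0] Afr) (hf : f (Ideal.Quotient.mk I1 y1) = Xa)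
    (g : B2 ≃ₐ[R0] Afr ⊗[R0] Afr)
    (hg1 : g (Ideal.Quotient.mk I2 y1) = Xa ⊗ₜ[R0] (1 : Afr))
    (hg2 : g (Ideal.Quotient.mk I2 (MvPolynomial.C hP - y2)) = (1 : Afr) ⊗ₜ[R0] Xa) :
    I2 ≤ I1 ∧
      ∀ s : S, f (Ideal.Quotient.mk I1 s) =
        LinearMap.mul' R0 Afr (g (Ideal.Quotient.mk I2 s)) := by
  refine ⟨I2_le_I1, fun s => ?_⟩
  have hfg : (f : B1 →ₐ[R0] Afr).comp (Ideal.Quotient.mkₐ R0 I1) =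
      (Algebra.TensorProduct.lmul' R0).comp ((g : B2 →ₐ[R0] Afr ⊗[R0] Afr).comp
        (Ideal.Quotient.mkₐ R0 I2)) := by
    refine MvPolynomial.algHom_ext fun i => ?_
    fin_cases i
    · change f (Ideal.Quotient.mk I1 y1) =
        Algebra.TensorProduct.lmul' R0 (g (Ideal.Quotient.mk I2 y1))
      rw [hf, hg1, Algebra.TensorProduct.lmul'_apply_tmul, mul_one]
    · change f (Ideal.Quotient.mk I1 y2) =
        Algebra.TensorProduct.lmul' R0 (g (Ideal.Quotient.mk I2 y2))
      rw [mk_I1_y2, mk_I2_y2, map_sub, map_sub, AlgEquiv.commutes, AlgEquiv.commutes, hf, hg2,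
        map_sub, AlgHom.commutes, Algebra.TensorProduct.lmul'_apply_tmul, one_mul]
  rw [← Algebra.TensorProduct.lmul'_toLinearMap]
  exact DFunLike.congr_fun hfg s

end
end
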